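/- Let L be a simple line arrangement of n ≥ 3 lines and let u = l1 ∩ l2 and v = l3 ∩ l4 be vertices of G_L with {l1,l2} ∩ {l3,l4} = ∅ (that is, u and v do not lie on a common line of L). Let Q_v be the intersection of the closed half-plane bounded by l1 containing v with the closed half-plane bounded by l2 containing v, and define Q_u analogously with l3, l4 and u. Then every vertex of every shortest u,v-path in G_L lies in Q_u ∩ Q_v. -/

import Mathlib

/-!
Fix a line `l` of the arrangement through `u` with `v` strictly on one side. No edge of `G_L`
crosses `l`, since the crossing point would be a vertex strictly inside the edge. So if a
shortest `u,v`-path entered the open opposite side, it would contain an excursion leaving `l` at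
a vertex `p` and returning at a vertex `q ≠ p`. Walking along `l` instead costs `m + 1` edges, `m`
being the number of vertices strictly between `p` and `q`, while the excursion needs at least
`m + 2`: every line through one of these `m` vertices separates `p` from `q`, and summing over
them the sign of the side a vertex lies on gives a potential that rises by `2m` along the
excursion but by at most `2` per edge, and by strictly less on the first edge, on an edge
returning to `l` and on the edge where the walk first leaves the line of its first edge.
-/

/-- A line in the Euclidean plane `ℝ × ℝ`, given by an affine equation. -/
def IsLine (l : Set (ℝ × ℝ)) : Prop :=
  ∃ a b c : ℝ, (a, b) ≠ (0, 0) ∧ l = {p : ℝ × ℝ | a * p.1 + b * p.2 = c}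

/-- A simple line arrangement of `n` lines in the Euclidean plane: `n` distinct lines,
every two of which meet in exactly one point, and no point lies on three of the lines. -/
structure SimpleLineArrangement (n : ℕ) where
  lines : Finset (Set (ℝ × ℝ))
  card_lines : lines.card = n
  isLine : ∀ l ∈ lines, IsLine l
  meet : ∀ l₁ ∈ lines, ∀ l₂ ∈ lines, l₁ ≠ l₂ → ∃! p : ℝ × ℝ, p ∈ l₁ ∩ l₂
  simple : ∀ p : ℝ × ℝ, ∀ l₁ ∈ lines, ∀ l₂ ∈ lines, ∀ l₃ ∈ lines,
    p ∈ l₁ → p ∈ l₂ → p ∈ l₃ → l₁ = l₂ ∨ l₁ = l₃ ∨ l₂ = l₃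

namespace SimpleLineArrangement

variable {n : ℕ}

/-- The vertex set of the arrangement: all intersection points of pairs of lines. -/
def verts (A : SimpleLineArrangement n) : Set (ℝ × ℝ) :=
  {p | ∃ l₁ ∈ A.lines, ∃ l₂ ∈ A.lines, l₁ ≠ l₂ ∧ p ∈ l₁ ∧ p ∈ l₂}

/-- The arrangement graph: two distinct vertices are adjacent iff some line of the
arrangement contains both and no other vertex lies strictly between them on that line. -/
def graph (A : SimpleLineArrangement n) : SimpleGraph (ℝ × ℝ) where
  Adj u v := u ≠ v ∧ u ∈ A.verts ∧ v ∈ A.verts ∧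
    ∃ l ∈ A.lines, u ∈ l ∧ v ∈ l ∧ ∀ w ∈ A.verts, w ∈ l → ¬ Sbtw ℝ u w v
  symm := ⟨by
    rintro u v ⟨huv, hu, hv, l, hl, hul, hvl, hbet⟩
    exact ⟨huv.symm, hv, hu, l, hl, hvl, hul, fun w hw hwl hb => hbet w hw hwl hb.symm⟩⟩
  loopless := ⟨by rintro u ⟨h, -⟩; exact h rfl⟩

/-- The degree of a vertex in the arrangement graph. -/
noncomputable def deg (A : SimpleLineArrangement n) (v : ℝ × ℝ) : ℕ :=
  {w | A.graph.Adj v w}.ncard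

/-- The number of vertices of the arrangement graph having degree `i`. -/
noncomputable def degCount (A : SimpleLineArrangement n) (i : ℕ) : ℕ :=
  {v | v ∈ A.verts ∧ A.deg v = i}.ncard

/-- The eccentricity of a vertex: the maximum graph distance to a vertex. -/
noncomputable def ecc (A : SimpleLineArrangement n) (u : ℝ × ℝ) : ℕ :=
  sSup ((fun v => A.graph.dist u v) '' A.verts)

/-- The realization `R(L)`: the union of the closed segments joining adjacent vertices. -/
def realization (A : SimpleLineArrangement n) : Set (ℝ × ℝ) :=
  ⋃ (u : ℝ × ℝ) (v : ℝ × ℝ) (_ : A.graph.Adj u v), segment ℝ u v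

/-- A point lies on the outer face of the realization if it belongs to the closure of
the unbounded connected component of the complement of the realization. -/
def OnOuterFace (A : SimpleLineArrangement n) (p : ℝ × ℝ) : Prop :=
  ∃ q : ℝ × ℝ, q ∉ A.realization ∧
    ¬ Bornology.IsBounded (connectedComponentIn (A.realization)ᶜ q) ∧
    p ∈ closure (connectedComponentIn (A.realization)ᶜ q)

end SimpleLineArrangement

/-- `H` is one of the two closed half-planes bounded by the line `l`. -/
def IsClosedHalfplaneOf (H l : Set (ℝ × ℝ)) : Prop :=
  ∃ a b c : ℝ, (a, b) ≠ (0, 0) ∧ l = {p : ℝ × ℝ | a * p.1 + b * p.2 = c} ∧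
    (H = {p : ℝ × ℝ | a * p.1 + b * p.2 ≤ c} ∨ H = {p : ℝ × ℝ | c ≤ a * p.1 + b * p.2})


section AffineFunctional

variable {V P : Type*} [AddCommGroup V] [Module ℝ V] [AddTorsor V P]

theorem AffineMap.exists_sbtw_apply_eq_zero (f : P →ᵃ[ℝ] ℝ) {y z : P} (hy : 0 < f y)
    (hz : f z < 0) : ∃ x, Sbtw ℝ y x z ∧ f x = 0 := by
  have hd : 0 < f y - f z := by linarith
  refine ⟨AffineMap.lineMap y z (f y / (f y - f z)), ?_, ?_⟩
  · refine sbtw_lineMap_iff.2 ⟨fun h => by rw [h] at hy; linarith, ?_, ?_⟩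
    · positivity
    · rw [div_lt_one hd]; linarith
  · rw [f.apply_lineMap, AffineMap.lineMap_apply_ring']
    field_simp
    ring

theorem Wbtw.apply_eq_zero (f : P →ᵃ[ℝ] ℝ) {x y z : P} (h : Wbtw ℝ y x z) (hy : f y = 0)
    (hz : f z = 0) : f x = 0 := by
  obtain ⟨t, -, rfl⟩ := h
  simp [hy, hz]

theorem Sbtw.apply_neg (f : P →ᵃ[ℝ] ℝ) {x y z : P} (h : Sbtw ℝ y x z) (hx : f x = 0)
    (hz : 0 < f z) : f y < 0 := by
  obtain ⟨t, ⟨ht0, ht1⟩, rfl⟩ := h.mem_image_Ioo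
  rw [f.apply_lineMap, AffineMap.lineMap_apply_ring'] at hx
  nlinarith

end AffineFunctional

def lineEquation (a b c : ℝ) : ℝ × ℝ →ᵃ[ℝ] ℝ where
  toFun p := a * p.1 + b * p.2 - c
  linear := a • LinearMap.fst ℝ ℝ ℝ + b • LinearMap.snd ℝ ℝ ℝ
  map_vadd' p v := by simp; ring

@[simp] theorem lineEquation_apply (a b c : ℝ) (p : ℝ × ℝ) :
    lineEquation a b c p = a * p.1 + b * p.2 - c := rfl

theorem IsLine.exists_affineMap {l : Set (ℝ × ℝ)} (hl : IsLine l) :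
    ∃ f : ℝ × ℝ →ᵃ[ℝ] ℝ, l = f ⁻¹' {0} := by
  obtain ⟨a, b, c, -, rfl⟩ := hl
  exact ⟨lineEquation a b c, by ext p; simp [sub_eq_zero]⟩

theorem IsLine.exists_affineMap_pos {l : Set (ℝ × ℝ)} (hl : IsLine l) {q : ℝ × ℝ}
    (hq : q ∉ l) : ∃ f : ℝ × ℝ →ᵃ[ℝ] ℝ, l = f ⁻¹' {0} ∧ 0 < f q := by
  obtain ⟨f, rfl⟩ := hl.exists_affineMap
  rcases (show f q ≠ 0 from hq).lt_or_gt with h | h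
  · exact ⟨-f, by ext p; simp, by simpa using h⟩
  · exact ⟨f, rfl, h⟩

theorem IsLine.mem_of_wbtw {l : Set (ℝ × ℝ)} (hl : IsLine l) {x y z : ℝ × ℝ}
    (h : Wbtw ℝ y x z) (hy : y ∈ l) (hz : z ∈ l) : x ∈ l := by
  obtain ⟨f, rfl⟩ := hl.exists_affineMap
  exact h.apply_eq_zero f hy hz

theorem IsClosedHalfplaneOf.exists_affineMap {H l : Set (ℝ × ℝ)} (h : IsClosedHalfplaneOf H l) :
    ∃ f : ℝ × ℝ →ᵃ[ℝ] ℝ, l = f ⁻¹' {0} ∧ H = {p | 0 ≤ f p} := by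
  obtain ⟨a, b, c, -, rfl, rfl | rfl⟩ := h
  · exact ⟨-lineEquation a b c, by ext p; simp [sub_eq_zero, eq_comm], by ext p; simp⟩
  · exact ⟨lineEquation a b c, by ext p; simp [sub_eq_zero], by ext p; simp⟩

theorem List.sum_map_lt_length {α : Type*} {L : List α} {f : α → ℕ} (h1 : ∀ a ∈ L, f a ≤ 1)
    (h0 : ∃ a ∈ L, f a = 0) : (L.map f).sum < L.length := by
  induction L with
  | nil => simp at h0
  | cons b L ih =>
    have h1' : ∀ a ∈ L, f a ≤ 1 := fun a ha => h1 a (.tail _ ha)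
    simp only [List.map_cons, List.sum_cons, List.length_cons]
    obtain ⟨a, ha, hfa⟩ := h0
    rcases List.mem_cons.1 ha with rfl | ha
    · have := List.sum_le_card_nsmul (L.map f) 1 (by simpa using h1')
      simp only [List.length_map, smul_eq_mul, mul_one] at this
      omega
    · have := ih h1' ⟨a, ha, hfa⟩
      have := h1 b (.head _)
      omega

theorem exists_negative_excursion {a : ℕ → ℝ} {n i : ℕ} (h0 : a 0 = 0) (hn : 0 < a n)
    (hi : a i < 0) (hin : i ≤ n) (hpos : ∀ j < n, 0 < a j → 0 ≤ a (j + 1))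
    (hneg : ∀ j < n, a j < 0 → a (j + 1) ≤ 0) :
    ∃ s r, s < r ∧ r ≤ n ∧ a s = 0 ∧ a (s + 1) < 0 ∧ a r = 0 := by
  classical
  have hex : ∃ i, a i < 0 := ⟨i, hi⟩
  set i₀ := Nat.find hex
  have hi₀ : a i₀ < 0 := Nat.find_spec hex
  have hi₀n : i₀ < n := lt_of_le_of_ne ((Nat.find_min' hex hi).trans hin) fun h => by
    rw [h] at hi₀; linarith
  have hi₀0 : i₀ ≠ 0 := fun h => by rw [h] at hi₀; linarith
  -- the excursion runs from `i₀ - 1` to the first later index where `a` is nonnegative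
  have hex' : ∃ r, i₀ < r ∧ 0 ≤ a r := ⟨n, hi₀n, hn.le⟩
  set r := Nat.find hex'
  obtain ⟨hi₀r, hr⟩ : i₀ < r ∧ 0 ≤ a r := Nat.find_spec hex'
  have hrn : r ≤ n := Nat.find_min' hex' ⟨hi₀n, hn.le⟩
  have hprev : a (r - 1) < 0 := by
    rcases (Nat.le_sub_one_of_lt hi₀r).eq_or_lt with h | h
    · rwa [← h]
    · exact not_le.1 fun h' => Nat.find_min hex' (Nat.sub_one_lt_of_lt hi₀r) ⟨h, h'⟩
  have hs : 0 ≤ a (i₀ - 1) := not_lt.1 (Nat.find_min hex (Nat.sub_one_lt hi₀0))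
  refine ⟨i₀ - 1, r, by omega, hrn, ?_, by rwa [Nat.sub_add_cancel (by omega)], ?_⟩
  · refine le_antisymm (not_lt.1 fun h => ?_) hs
    have := hpos (i₀ - 1) (by omega) h
    rw [Nat.sub_add_cancel (by omega)] at this
    linarith
  · refine le_antisymm ?_ hr
    simpa [Nat.sub_add_cancel (show 1 ≤ r by omega)] using hneg (r - 1) (by omega) hprev

namespace SimpleGraph.Walk

variable {V : Type*} {G : SimpleGraph V} {u v : V}

theorem exists_length_eq_sub (P : G.Walk u v) {s r : ℕ} (hsr : s ≤ r) (hr : r ≤ P.length) :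
    ∃ W : G.Walk (P.getVert s) (P.getVert r), W.length = r - s :=
  ⟨((P.drop s).take (r - s)).copy rfl (by rw [drop_getVert, Nat.add_sub_cancel' hsr]),
    by simp; omega⟩

theorem sub_le_length_of_length_eq_dist (P : G.Walk u v) (hP : P.length = G.dist u v)
    {s r : ℕ} (hr : r ≤ P.length) (W : G.Walk (P.getVert s) (P.getVert r)) :
    r - s ≤ W.length := by
  have := G.dist_le ((P.take s).append (W.append (P.drop r)))
  simp only [length_append, take_length, drop_length] at this
  omega

end SimpleGraph.Walk

namespace SimpleLineArrangement

open Finset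

variable {n : ℕ} (A : SimpleLineArrangement n) {l e m : Set (ℝ × ℝ)}
  {p q u v w x y z : ℝ × ℝ}

theorem inter_subsingleton (hl : l ∈ A.lines) (hm : m ∈ A.lines) (hlm : l ≠ m) :
    (l ∩ m).Subsingleton := by
  obtain ⟨p, -, hp⟩ := A.meet l hl m hm hlm
  intro x hx y hy
  rw [hp x hx, hp y hy]

theorem eq_of_mem_of_mem (he : e ∈ A.lines) (hl : l ∈ A.lines) (hm : m ∈ A.lines)
    (hpe : p ∈ e) (hpl : p ∈ l) (hpm : p ∈ m) (hle : l ≠ e) (hme : m ≠ e) : l = m := by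
  rcases A.simple p e he l hl m hm hpe hpl hpm with h | h | h
  exacts [absurd h.symm hle, absurd h.symm hme, h]

theorem notMem_of_mem_of_mem {l₁ l₂ l₃ : Set (ℝ × ℝ)} (h₁ : l₁ ∈ A.lines) (h₂ : l₂ ∈ A.lines)
    (h₃ : l₃ ∈ A.lines) (hu₁ : u ∈ l₁) (hu₂ : u ∈ l₂) (h₁₂ : l₁ ≠ l₂) (h₁₃ : l₁ ≠ l₃)
    (h₂₃ : l₂ ≠ l₃) : u ∉ l₃ :=
  fun hu₃ => h₂₃ (A.eq_of_mem_of_mem h₁ h₂ h₃ hu₁ hu₂ hu₃ h₁₂.symm h₁₃.symm)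

theorem finite_verts : A.verts.Finite := by
  have hverts : A.verts ⊆ ⋃ l ∈ (A.lines : Set (Set (ℝ × ℝ))),
      ⋃ m ∈ (A.lines : Set (Set (ℝ × ℝ))), {p | l ≠ m ∧ p ∈ l ∧ p ∈ m} := by
    rintro p ⟨l, hl, m, hm, hpm⟩
    simp only [Set.mem_iUnion]
    exact ⟨l, hl, m, hm, hpm⟩
  refine Set.Finite.subset (A.lines.finite_toSet.biUnion fun l hl =>
    A.lines.finite_toSet.biUnion fun m hm => ?_) hverts
  by_cases hlm : l = m
  · simp [hlm]
  · exact (A.inter_subsingleton hl hm hlm).finite.subset fun p hp => hp.2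

theorem exists_line_of_adj (h : A.graph.Adj y z) : ∃ e ∈ A.lines, y ∈ e ∧ z ∈ e :=
  let ⟨_, _, _, e, he, hy, hz, _⟩ := h
  ⟨e, he, hy, hz⟩

theorem nonneg_of_adj {f : ℝ × ℝ →ᵃ[ℝ] ℝ} (hf : f ⁻¹' {0} ∈ A.lines) (hyz : A.graph.Adj y z)
    (hy : 0 < f y) : 0 ≤ f z := by
  by_contra! hz
  obtain ⟨x, hx, hfx⟩ := f.exists_sbtw_apply_eq_zero hy hz
  obtain ⟨-, -, -, e, he, hye, hze, hbetween⟩ := hyz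
  have hxe : x ∈ e := (A.isLine e he).mem_of_wbtw hx.wbtw hye hze
  have hef : e ≠ f ⁻¹' {0} := fun h => hy.ne' (by rw [h] at hye; exact hye)
  exact hbetween x ⟨e, he, _, hf, hef, hxe, hfx⟩ hxe hx

theorem nonpos_of_adj {f : ℝ × ℝ →ᵃ[ℝ] ℝ} (hf : f ⁻¹' {0} ∈ A.lines) (hyz : A.graph.Adj y z)
    (hy : f y < 0) : f z ≤ 0 := by
  have hneg : (-f) ⁻¹' {0} = f ⁻¹' {0} := by ext; simp
  simpa using A.nonneg_of_adj (f := -f) (hneg ▸ hf) hyz (by simpa using hy)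

def between (l : Set (ℝ × ℝ)) (p q : ℝ × ℝ) : Set (ℝ × ℝ) :=
  {x | x ∈ A.verts ∧ x ∈ l ∧ Sbtw ℝ p x q}

theorem finite_between : (A.between l p q).Finite :=
  A.finite_verts.subset fun _ hx => hx.1

theorem adj_of_between_eq_empty (hl : l ∈ A.lines) (hp : p ∈ A.verts) (hq : q ∈ A.verts)
    (hpl : p ∈ l) (hql : q ∈ l) (hpq : p ≠ q) (h : A.between l p q = ∅) : A.graph.Adj p q :=
  ⟨hpq, hp, hq, l, hl, hpl, hql, fun w hw hwl hb =>
    Set.eq_empty_iff_forall_notMem.1 h w ⟨hw, hwl, hb⟩⟩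

theorem exists_walk_length_le (hl : l ∈ A.lines) (hp : p ∈ A.verts) (hq : q ∈ A.verts)
    (hpl : p ∈ l) (hql : q ∈ l) :
    ∃ W : A.graph.Walk p q, W.length ≤ (A.between l p q).ncard + 1 := by
  induction hk : (A.between l p q).ncard using Nat.strong_induction_on generalizing p with
  | _ k ih =>
  by_cases hpq : p = q
  · subst hpq
    exact ⟨.nil, by simp⟩
  rcases (A.between l p q).eq_empty_or_nonempty with hB | hB
  · exact ⟨(A.adj_of_between_eq_empty hl hp hq hpl hql hpq hB).toWalk, by simp⟩
  obtain ⟨z, ⟨hz, hzl, hpzq⟩, hnearest⟩ := (A.between l p q).exists_min_image (dist p) A.finite_between hB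
  have hpz : A.graph.Adj p z := by
    refine A.adj_of_between_eq_empty hl hp hz hpl hzl hpzq.left_ne ?_
    refine Set.eq_empty_iff_forall_notMem.2 fun w ⟨hw, hwl, hpwz⟩ => ?_
    change Sbtw ℝ p w z at hpwz
    have hcloser : dist p w < dist p z := by
      rw [← hpwz.wbtw.dist_add_dist]
      simpa using hpwz.ne_right
    exact (hnearest w ⟨hw, hwl, hpzq.trans_left hpwz⟩).not_gt hcloser
  have hsub : A.between l z q ⊂ A.between l p q := by
    refine (Set.ssubset_iff_of_subset ?_).2 ⟨z, ⟨hz, hzl, hpzq⟩, fun h => h.2.2.left_ne rfl⟩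
    exact fun w ⟨hw, hwl, hzwq⟩ => ⟨hw, hwl, hpzq.trans_right hzwq⟩
  obtain ⟨W, hW⟩ := ih _ (hk ▸ Set.ncard_lt_ncard hsub A.finite_between) hz hzl rfl
  refine ⟨.cons hpz W, ?_⟩
  have := Set.ncard_lt_ncard hsub A.finite_between
  simp only [SimpleGraph.Walk.length_cons]
  omega

theorem exists_other_line (hl : l ∈ A.lines) (hx : x ∈ A.verts) (hxl : x ∈ l) (hql : q ∈ l)
    (hxq : x ≠ q) :
    ∃ g : ℝ × ℝ →ᵃ[ℝ] ℝ, g ⁻¹' {0} ∈ A.lines ∧ g ⁻¹' {0} ≠ l ∧ g x = 0 ∧ 0 < g q := by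
  obtain ⟨t, ht, htl, hxt⟩ : ∃ t ∈ A.lines, t ≠ l ∧ x ∈ t := by
    obtain ⟨m₁, hm₁, m₂, hm₂, hne, hx₁, hx₂⟩ := hx
    by_cases h : m₁ = l
    · exact ⟨m₂, hm₂, h ▸ hne.symm, hx₂⟩
    · exact ⟨m₁, hm₁, h, hx₁⟩
  have hqt : q ∉ t := fun h => hxq (A.inter_subsingleton ht hl htl ⟨hxt, hxl⟩ ⟨h, hql⟩)
  obtain ⟨g, rfl, hgq⟩ := (A.isLine t ht).exists_affineMap_pos hqt
  exact ⟨g, ht, htl, hxt, hgq⟩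

theorem eq_of_adj (hyz : A.graph.Adj y z) (hl : l ∈ A.lines) (hm : m ∈ A.lines) (hyl : y ∈ l)
    (hzl : z ∉ l) (hym : y ∈ m) (hzm : z ∉ m) : l = m := by
  obtain ⟨e, he, hye, hze⟩ := A.exists_line_of_adj hyz
  exact A.eq_of_mem_of_mem he hl hm hye hyl hym (fun h => hzl (h ▸ hze)) fun h => hzm (h ▸ hze)

/- For a family of lines `g x ⁻¹' {0}` (`x ∈ S`) of `A`, the potential of a point `w` is
`∑ x ∈ S, sign (g x w)`, and `#{x ∈ S | g x y = 0 ∧ g x z ≠ 0}` counts the lines of the family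
through `y` but not through `z`. -/
section Potential

variable {S : Finset (ℝ × ℝ)} {g : ℝ × ℝ → ℝ × ℝ →ᵃ[ℝ] ℝ}

theorem card_filter_le_one (hg : ∀ x ∈ S, g x ⁻¹' {0} ∈ A.lines)
    (hinj : Set.InjOn (fun x => g x ⁻¹' {0}) S) (hyz : A.graph.Adj y z) :
    #{x ∈ S | g x y = 0 ∧ g x z ≠ 0} ≤ 1 := by
  refine Finset.card_le_one.2 fun x hx x' hx' => ?_
  simp only [Finset.mem_filter] at hx hx'
  exact hinj hx.1 hx'.1 (A.eq_of_adj hyz (hg x hx.1) (hg x' hx'.1) hx.2.1 hx.2.2 hx'.2.1 hx'.2.2)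

theorem card_filter_eq_zero (hg : ∀ x ∈ S, g x ⁻¹' {0} ∈ A.lines) (hm : m ∈ A.lines)
    (hgm : ∀ x ∈ S, g x ⁻¹' {0} ≠ m) (hyz : A.graph.Adj y z) (hym : y ∈ m) (hzm : z ∉ m) :
    #{x ∈ S | g x y = 0 ∧ g x z ≠ 0} = 0 := by
  refine Finset.card_eq_zero.2 (Finset.filter_eq_empty_iff.2 fun x hx h => hgm x hx ?_)
  exact A.eq_of_adj hyz (hg x hx) hm h.1 h.2 hym hzm

theorem sign_sub_sign_le {f : ℝ × ℝ →ᵃ[ℝ] ℝ} (hf : f ⁻¹' {0} ∈ A.lines) (hyz : A.graph.Adj y z) :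
    (SignType.sign (f z) : ℤ) - SignType.sign (f y) ≤
      (if f y = 0 ∧ f z ≠ 0 then 1 else 0) + (if f z = 0 ∧ f y ≠ 0 then 1 else 0) := by
  have hcross := A.nonneg_of_adj hf hyz
  have hcross' := A.nonpos_of_adj hf hyz
  rcases lt_trichotomy (f y) 0 with hy | hy | hy <;>
    rcases lt_trichotomy (f z) 0 with hz | hz | hz
  all_goals first
    | linarith [hcross hy] | linarith [hcross' hy]
    | simp [sign_neg, sign_pos, hy, hz, ne_of_lt, ne_of_gt]

theorem sum_sign_sub_sum_sign_le (hg : ∀ x ∈ S, g x ⁻¹' {0} ∈ A.lines) (hyz : A.graph.Adj y z) :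
    ∑ x ∈ S, (SignType.sign (g x z) : ℤ) - ∑ x ∈ S, (SignType.sign (g x y) : ℤ) ≤
      #{x ∈ S | g x y = 0 ∧ g x z ≠ 0} + #{x ∈ S | g x z = 0 ∧ g x y ≠ 0} := by
  rw [← Finset.sum_sub_distrib, Finset.card_filter, Finset.card_filter]
  push_cast
  rw [← Finset.sum_add_distrib]
  exact Finset.sum_le_sum fun x hx => A.sign_sub_sign_le (hg x hx) hyz

theorem sum_sign_sub_sum_sign_le_of_walk (hg : ∀ x ∈ S, g x ⁻¹' {0} ∈ A.lines)
    (W : A.graph.Walk y z) :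
    ∑ x ∈ S, (SignType.sign (g x z) : ℤ) - ∑ x ∈ S, (SignType.sign (g x y) : ℤ) ≤
      (W.darts.map fun d => #{x ∈ S | g x d.fst = 0 ∧ g x d.snd ≠ 0}).sum +
        (W.darts.map fun d => #{x ∈ S | g x d.snd = 0 ∧ g x d.fst ≠ 0}).sum := by
  induction W with
  | nil => simp
  | cons h W ih =>
    have := A.sum_sign_sub_sum_sign_le hg h
    simp only [SimpleGraph.Walk.darts_cons, List.map_cons, List.sum_cons]
    push_cast at ih ⊢
    linarith

theorem sum_sign_sub_sum_sign_add_two_le {c : Set (ℝ × ℝ)} (hl : l ∈ A.lines) (hc : c ∈ A.lines)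
    (hg : ∀ x ∈ S, g x ⁻¹' {0} ∈ A.lines) (hinj : Set.InjOn (fun x => g x ⁻¹' {0}) S)
    (hgl : ∀ x ∈ S, g x ⁻¹' {0} ≠ l) (hgc : ∀ x ∈ S, g x ⁻¹' {0} ≠ c) (W : A.graph.Walk y z)
    (hyl : y ∉ l) (hzl : z ∈ l) (hyc : y ∈ c) (hzc : z ∉ c) :
    ∑ x ∈ S, (SignType.sign (g x z) : ℤ) - ∑ x ∈ S, (SignType.sign (g x y) : ℤ) + 2 ≤
      2 * W.length := by
  have hsum := A.sum_sign_sub_sum_sign_le_of_walk hg W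
  obtain ⟨d, hd, hdc, hdc'⟩ := W.exists_boundary_dart c hyc hzc
  obtain ⟨d', hd', hdl, hdl'⟩ := W.exists_boundary_dart lᶜ hyl (by simpa using hzl)
  have hleave := List.sum_map_lt_length
    (f := fun e : A.graph.Dart => #{x ∈ S | g x e.fst = 0 ∧ g x e.snd ≠ 0})
    (fun e _ => A.card_filter_le_one hg hinj e.adj)
    ⟨d, hd, A.card_filter_eq_zero hg hc hgc d.adj hdc hdc'⟩
  have henter := List.sum_map_lt_length
    (f := fun e : A.graph.Dart => #{x ∈ S | g x e.snd = 0 ∧ g x e.fst ≠ 0})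
    (fun e _ => A.card_filter_le_one hg hinj e.adj.symm)
    ⟨d', hd', A.card_filter_eq_zero hg hl hgl d'.adj.symm (not_not.1 hdl') hdl⟩
  rw [SimpleGraph.Walk.length_darts] at hleave henter
  omega

end Potential

theorem ncard_between_lt_length (hl : l ∈ A.lines) (hp : p ∈ l) (hq : q ∈ l) (hpq : p ≠ q)
    (hpy : A.graph.Adj p y) (hy : y ∉ l) (W : A.graph.Walk y q) :
    (A.between l p q).ncard < W.length := by
  classical
  obtain ⟨c, hc, hpc, hyc⟩ := A.exists_line_of_adj hpy
  have hcl : c ≠ l := fun h => hy (h ▸ hyc)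
  have hqc : q ∉ c := fun h => hpq (A.inter_subsingleton hc hl hcl ⟨hpc, hp⟩ ⟨h, hq⟩)
  set S := (A.finite_between (l := l) (p := p) (q := q)).toFinset
  have hS (x) (hx : x ∈ S) : x ∈ A.verts ∧ x ∈ l ∧ Sbtw ℝ p x q :=
    (Set.Finite.mem_toFinset A.finite_between).1 hx
  choose! g hgl hgne hgx hgq using fun x hx =>
    A.exists_other_line hl (hS x hx).1 (hS x hx).2.1 hq (hS x hx).2.2.ne_right
  have hinj : Set.InjOn (fun x => g x ⁻¹' {0}) S := fun x hx x' hx' h => by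
    have hx'g : x' ∈ g x ⁻¹' {0} := by
      simp only at h
      exact h ▸ hgx x' hx'
    exact A.inter_subsingleton (hgl x hx) hl (hgne x hx) ⟨hgx x hx, (hS x hx).2.1⟩
      ⟨hx'g, (hS x' hx').2.1⟩
  have hgc : ∀ x ∈ S, g x ⁻¹' {0} ≠ c := fun x hx h => (hS x hx).2.2.left_ne
    (A.inter_subsingleton hc hl hcl ⟨hpc, hp⟩ ⟨(h ▸ hgx x hx : x ∈ c), (hS x hx).2.1⟩)
  have hΦq : ∑ x ∈ S, (SignType.sign (g x q) : ℤ) = #S := by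
    rw [Finset.sum_congr rfl fun x hx => by rw [sign_pos (hgq x hx)]]
    simp
  have hΦp : ∑ x ∈ S, (SignType.sign (g x p) : ℤ) = -#S := by
    rw [Finset.sum_congr rfl fun x hx => by
      rw [sign_neg ((hS x hx).2.2.apply_neg (g x) (hgx x hx) (hgq x hx))]]
    simp
  have hfirst := A.sum_sign_sub_sum_sign_le hgl hpy
  rw [A.card_filter_eq_zero hgl hl hgne hpy hp hy] at hfirst
  have hfirst' := A.card_filter_le_one hgl hinj hpy.symm
  have hrest := A.sum_sign_sub_sum_sign_add_two_le hl hc hgl hinj hgne hgc W hy hq hyc hqc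
  rw [show (A.between l p q).ncard = #S from Set.ncard_eq_toFinset_card _ _]
  push_cast at hfirst hfirst'
  omega

theorem nonneg_of_mem_support {f : ℝ × ℝ →ᵃ[ℝ] ℝ} (hf : f ⁻¹' {0} ∈ A.lines) (hu : f u = 0)
    (hv : 0 < f v) (P : A.graph.Walk u v) (hP : P.length = A.graph.dist u v)
    (hw : w ∈ P.support) : 0 ≤ f w := by
  by_contra! hfw
  obtain ⟨i, rfl, hi⟩ := SimpleGraph.Walk.mem_support_iff_exists_getVert.1 hw
  obtain ⟨s, r, hsr, hr, hs, hs1, hr0⟩ :=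
    exists_negative_excursion (a := fun j => f (P.getVert j)) (by simpa) (by simpa) hfw hi
      (fun j hj => A.nonneg_of_adj hf (P.adj_getVert_succ hj))
      (fun j hj => A.nonpos_of_adj hf (P.adj_getVert_succ hj))
  have hne : P.getVert s ≠ P.getVert r := fun h => by
    have := P.sub_le_length_of_length_eq_dist hP hr (SimpleGraph.Walk.nil.copy rfl h)
    simp only [SimpleGraph.Walk.length_copy, SimpleGraph.Walk.length_nil] at this
    omega
  have hsv : P.getVert s ∈ A.verts := (P.adj_getVert_succ (by omega)).2.1
  have hrv : P.getVert r ∈ A.verts := by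
    have := P.adj_getVert_succ (i := r - 1) (by omega)
    rw [Nat.sub_add_cancel (by omega)] at this
    exact this.2.2.1
  obtain ⟨L, hL⟩ := A.exists_walk_length_le hf hsv hrv hs hr0
  obtain ⟨D, hD⟩ := P.exists_length_eq_sub (s := s + 1) (by omega) hr
  have hdip := A.ncard_between_lt_length hf hs hr0 hne (P.adj_getVert_succ (by omega))
    hs1.ne D
  have := P.sub_le_length_of_length_eq_dist hP hr L
  omega

theorem mem_of_mem_support {l H : Set (ℝ × ℝ)} (hl : l ∈ A.lines) (hH : IsClosedHalfplaneOf H l)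
    (hu : u ∈ l) (hvH : v ∈ H) (hvl : v ∉ l) (P : A.graph.Walk u v)
    (hP : P.length = A.graph.dist u v) (hw : w ∈ P.support) : w ∈ H := by
  obtain ⟨f, rfl, rfl⟩ := hH.exists_affineMap
  exact A.nonneg_of_mem_support hl hu (lt_of_le_of_ne hvH (Ne.symm hvl)) P hP hw

end SimpleLineArrangement

theorem shortest_path_in_quadrants_general (n : ℕ) (A : SimpleLineArrangement n)
    (l1 l2 l3 l4 : Set (ℝ × ℝ)) (h1 : l1 ∈ A.lines) (h2 : l2 ∈ A.lines)
    (h3 : l3 ∈ A.lines) (h4 : l4 ∈ A.lines) (h12 : l1 ≠ l2) (h34 : l3 ≠ l4)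
    (hdisj : ({l1, l2} : Set (Set (ℝ × ℝ))) ∩ {l3, l4} = ∅)
    (u v : ℝ × ℝ) (hu : u ∈ l1 ∩ l2) (hv : v ∈ l3 ∩ l4)
    (Qv1 Qv2 Qu3 Qu4 : Set (ℝ × ℝ))
    (hQv1 : IsClosedHalfplaneOf Qv1 l1) (hvQ1 : v ∈ Qv1)
    (hQv2 : IsClosedHalfplaneOf Qv2 l2) (hvQ2 : v ∈ Qv2)
    (hQu3 : IsClosedHalfplaneOf Qu3 l3) (huQ3 : u ∈ Qu3)
    (hQu4 : IsClosedHalfplaneOf Qu4 l4) (huQ4 : u ∈ Qu4)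
    (P : A.graph.Walk u v) (hlen : P.length = A.graph.dist u v) :
    ∀ w ∈ P.support, w ∈ (Qu3 ∩ Qu4) ∩ (Qv1 ∩ Qv2) := by
  intro w hw
  have hne (a b : Set (ℝ × ℝ)) (ha : a ∈ ({l1, l2} : Set _)) (hb : b ∈ ({l3, l4} : Set _)) :
      a ≠ b := fun h => Set.eq_empty_iff_forall_notMem.1 hdisj a ⟨ha, h ▸ hb⟩
  have hlen' : P.reverse.length = A.graph.dist v u := by
    rw [SimpleGraph.Walk.length_reverse, hlen, SimpleGraph.dist_comm]
  have hw' : w ∈ P.reverse.support := by simpa using hw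
  refine ⟨⟨?_, ?_⟩, ?_, ?_⟩
  · exact A.mem_of_mem_support h3 hQu3 hv.1 huQ3 (A.notMem_of_mem_of_mem h1 h2 h3 hu.1 hu.2 h12
      (hne _ _ (by simp) (by simp)) (hne _ _ (by simp) (by simp))) P.reverse hlen' hw'
  · exact A.mem_of_mem_support h4 hQu4 hv.2 huQ4 (A.notMem_of_mem_of_mem h1 h2 h4 hu.1 hu.2 h12
      (hne _ _ (by simp) (by simp)) (hne _ _ (by simp) (by simp))) P.reverse hlen' hw'
  · exact A.mem_of_mem_support h1 hQv1 hu.1 hvQ1 (A.notMem_of_mem_of_mem h3 h4 h1 hv.1 hv.2 h34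
      (hne _ _ (by simp) (by simp)).symm (hne _ _ (by simp) (by simp)).symm) P hlen hw
  · exact A.mem_of_mem_support h2 hQv2 hu.2 hvQ2 (A.notMem_of_mem_of_mem h3 h4 h2 hv.1 hv.2 h34
      (hne _ _ (by simp) (by simp)).symm (hne _ _ (by simp) (by simp)).symm) P hlen hw

theorem shortest_path_in_quadrants (n : ℕ) (hn : 3 ≤ n) (A : SimpleLineArrangement n)
    (l1 l2 l3 l4 : Set (ℝ × ℝ)) (h1 : l1 ∈ A.lines) (h2 : l2 ∈ A.lines)
    (h3 : l3 ∈ A.lines) (h4 : l4 ∈ A.lines) (h12 : l1 ≠ l2) (h34 : l3 ≠ l4)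
    (hdisj : ({l1, l2} : Set (Set (ℝ × ℝ))) ∩ {l3, l4} = ∅)
    (u v : ℝ × ℝ) (hu : u ∈ l1 ∩ l2) (hv : v ∈ l3 ∩ l4)
    (Qv1 Qv2 Qu3 Qu4 : Set (ℝ × ℝ))
    (hQv1 : IsClosedHalfplaneOf Qv1 l1) (hvQ1 : v ∈ Qv1)
    (hQv2 : IsClosedHalfplaneOf Qv2 l2) (hvQ2 : v ∈ Qv2)
    (hQu3 : IsClosedHalfplaneOf Qu3 l3) (huQ3 : u ∈ Qu3)
    (hQu4 : IsClosedHalfplaneOf Qu4 l4) (huQ4 : u ∈ Qu4)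
    (P : A.graph.Walk u v) (hP : P.IsPath) (hlen : P.length = A.graph.dist u v) :
    ∀ w ∈ P.support, w ∈ (Qu3 ∩ Qu4) ∩ (Qv1 ∩ Qv2) :=
  shortest_path_in_quadrants_general n A l1 l2 l3 l4 h1 h2 h3 h4 h12 h34 hdisj u v hu hv Qv1 Qv2 Qu3
    Qu4 hQv1 hvQ1 hQv2 hvQ2 hQu3 huQ3 hQu4 huQ4 P hlen
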